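/- arXiv:2506.23599 — 2 statements merged into one kernel-verified Lean document; each statement's English description precedes it below -/
import Mathlib

section
/- For k, ℓ ∈ ℤ_{≥0}, the coefficient-wise identity Cay_m(2k−ℓ; ℓ) = (−1)^m · m! · K_m(k; ℓ) holds for all 0 ≤ m ≤ ℓ, where Cay is the Cayley continuant and K the binary Krawtchouk polynomial. -/
open Finset

/-- Falling factorial `r(r-1)⋯(r-j+1)`. -/
noncomputable def fallFac (r : ℂ) (j : ℕ) : ℂ := (descPochhammer ℂ j).eval r

/-- Rising factorial `r(r+1)⋯(r+j-1)`. -/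
noncomputable def riseFac (r : ℂ) (j : ℕ) : ℂ := (ascPochhammer ℂ j).eval r

/-- Generalized binomial coefficient. -/
noncomputable def gchoose (a : ℂ) (k : ℕ) : ℂ := fallFac a k / (k.factorial : ℂ)

/-- Cayley continuant `Cay_m(x;y)`. -/
noncomputable def Cay (m : ℕ) (x y : ℂ) : ℂ :=
  ∑ j ∈ range (m + 1),
    (m.choose j : ℂ) * fallFac ((x + y) / 2) j * riseFac ((x - y) / 2) (m - j)

/-- Binary Krawtchouk polynomial. -/
noncomputable def Kraw (m : ℕ) (x y : ℂ) : ℂ :=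
  ∑ j ∈ range (m + 1), (-1 : ℂ) ^ j * gchoose x j * gchoose (y - x) (m - j)

theorem riseFac_neg (r : ℂ) (j : ℕ) : riseFac (-r) j = (-1) ^ j * fallFac r j :=
  ascPochhammer_eval_neg_eq_descPochhammer ℂ r j

theorem Cay_two_mul_sub (m : ℕ) (a b : ℂ) :
    Cay m (2 * a - b) b =
      ∑ j ∈ range (m + 1),
        (m.choose j : ℂ) * fallFac a j * ((-1) ^ (m - j) * fallFac (b - a) (m - j)) := by
  have hsum : (2 * a - b + b) / 2 = a := by ring
  have hdiff : (2 * a - b - b) / 2 = -(b - a) := by ring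
  simp only [Cay, hsum, hdiff, riseFac_neg]

theorem Cay_two_mul_sub_eq_Kraw (m : ℕ) (a b : ℂ) :
    Cay m (2 * a - b) b = (-1) ^ m * (m.factorial : ℂ) * Kraw m a b := by
  rw [Cay_two_mul_sub, Kraw, mul_sum]
  refine sum_congr rfl fun j hj => ?_
  have hjm : j ≤ m := Nat.lt_succ_iff.mp (mem_range.mp hj)
  have hsign : (-1 : ℂ) ^ (m - j) = (-1) ^ m * (-1) ^ j := by
    rw [pow_sub₀ _ (by norm_num) hjm, ← inv_pow, inv_neg, inv_one]
  rw [Nat.cast_choose ℂ hjm, hsign, gchoose, gchoose]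
  have hj : (j.factorial : ℂ) ≠ 0 := Nat.cast_ne_zero.2 j.factorial_ne_zero
  have hmj : ((m - j).factorial : ℂ) ≠ 0 := Nat.cast_ne_zero.2 (m - j).factorial_ne_zero
  field_simp

theorem cayley_eq_krawtchouk'_general (k ℓ m : ℕ) :
    Cay m (2 * (k : ℂ) - ℓ) (ℓ : ℂ) =
      (-1 : ℂ) ^ m * (m.factorial : ℂ) * Kraw m (k : ℂ) (ℓ : ℂ) :=
  Cay_two_mul_sub_eq_Kraw m k ℓ

/-- For `0 ≤ m ≤ ℓ`, `Cay_m(2k−ℓ; ℓ) = (−1)^m m! K_m(k; ℓ)`. -/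
theorem cayley_eq_krawtchouk' (k ℓ m : ℕ) (h : m ≤ ℓ) :
    Cay m (2 * (k : ℂ) - ℓ) (ℓ : ℂ) =
      (-1 : ℂ) ^ m * (m.factorial : ℂ) * Kraw m (k : ℂ) (ℓ : ℂ) :=
  cayley_eq_krawtchouk'_general k ℓ m
end

section
/- For k ≥ 1 and the recursively defined sequence a₀ = 1, a_m = (−1/(4m))·(k−m+1)·((k−m+2)² a_{m−2} − 2s a_{m−1}) for 1 ≤ m ≤ k (with a_{−1} = 0), one has a_m = (1/2^m) C(k,m) Cay_m(s;k) for all 0 ≤ m ≤ k. -/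
open Finset

lemma fallFac_succ (r : ℂ) (j : ℕ) : fallFac r (j+1) = fallFac r j * (r - j) := by
  simp [fallFac, descPochhammer_succ_right]

lemma riseFac_succ (r : ℂ) (i : ℕ) : riseFac r (i+1) = riseFac r i * (r + i) := by
  simp [riseFac, ascPochhammer_succ_right]

lemma pascal_sum (n : ℕ) (c : ℕ → ℂ) :
    ∑ j ∈ range (n+2), ((n+1).choose j : ℂ) * c j
    = (∑ j ∈ range (n+1), (n.choose j : ℂ) * c j)
      + ∑ j ∈ range (n+1), (n.choose j : ℂ) * c (j+1) := by
  rw [Finset.sum_range_succ' (fun j => ((n+1).choose j : ℂ) * c j)]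
  simp only [Nat.choose_succ_succ, Nat.cast_add, add_mul, Nat.choose_zero_right, Nat.cast_one]
  rw [Finset.sum_add_distrib]
  have h2 : (∑ i ∈ range (n+1), (n.choose (i+1) : ℂ) * c (i+1)) + (1 : ℂ) * c 0
      = ∑ j ∈ range (n+1), (n.choose j : ℂ) * c j := by
    have := Finset.sum_range_succ' (fun j => (n.choose j : ℂ) * c j) (n+1)
    rw [Finset.sum_range_succ] at this
    simp only [Nat.choose_zero_right, Nat.cast_one, Nat.choose_succ_self, Nat.cast_zero,
      zero_mul, add_zero] at this
    linear_combination -this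
  linear_combination h2

lemma claim2 (u v : ℂ) (n : ℕ) :
    ∑ j ∈ range (n+2), ((n+1).choose j : ℂ) * ((n+1 : ℂ) - 2*j) * (fallFac u j * riseFac v (n+1-j))
    = -((n+1 : ℂ) * (u - v - n)) * ∑ j ∈ range (n+1), (n.choose j : ℂ) * fallFac u j * riseFac v (n-j) := by
  have hsplit : ∀ j ∈ range (n+2),
      ((n+1).choose j : ℂ) * ((n+1 : ℂ) - 2*j) * (fallFac u j * riseFac v (n+1-j))
      = ((n+1).choose j : ℂ) * ((n+1 : ℂ) - j) * (fallFac u j * riseFac v (n+1-j))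
        - ((n+1).choose j : ℂ) * (j : ℂ) * (fallFac u j * riseFac v (n+1-j)) := by
    intro j hj; ring
  rw [Finset.sum_congr rfl hsplit, Finset.sum_sub_distrib]
  have hA : ∑ j ∈ range (n+2), ((n+1).choose j : ℂ) * ((n+1 : ℂ) - j) * (fallFac u j * riseFac v (n+1-j))
      = (n+1:ℂ) * ∑ j ∈ range (n+1), (n.choose j : ℂ) * fallFac u j * riseFac v (n-j) * (v + ((n:ℂ) - j)) := by
    have h1 : ∀ j ∈ range (n+2), ((n+1).choose j : ℂ) * ((n+1 : ℂ) - j) * (fallFac u j * riseFac v (n+1-j))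
        = (n+1:ℂ) * ((n.choose j : ℂ) * (fallFac u j * riseFac v (n+1-j))) := by
      intro j hj
      have hj' : j ≤ n+1 := by have := mem_range.mp hj; omega
      have hnat : (n+1).choose j * ((n+1) - j) = (n+1) * n.choose j := by
        rw [← Nat.choose_succ_right_eq, Nat.add_one_mul_choose_eq]
      have hc : ((n+1).choose j : ℂ) * ((n+1 : ℂ) - j) = (n+1:ℂ) * (n.choose j : ℂ) := by
        have h := congrArg (Nat.cast : ℕ → ℂ) hnat
        push_cast [Nat.cast_sub hj'] at h
        linear_combination h
      rw [hc]; ring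
    rw [Finset.sum_congr rfl h1, ← Finset.mul_sum]
    congr 1
    rw [Finset.sum_range_succ]
    simp only [Nat.choose_succ_self, Nat.cast_zero, zero_mul, add_zero]
    apply Finset.sum_congr rfl
    intro j hj
    have hj' : j ≤ n := by have := mem_range.mp hj; omega
    have h2 : n+1-j = (n-j)+1 := by omega
    rw [h2, riseFac_succ, Nat.cast_sub hj']
    ring
  have hB : ∑ j ∈ range (n+2), ((n+1).choose j : ℂ) * (j : ℂ) * (fallFac u j * riseFac v (n+1-j))
      = (n+1:ℂ) * ∑ j ∈ range (n+1), (n.choose j : ℂ) * fallFac u j * riseFac v (n-j) * (u - j) := by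
    rw [Finset.sum_range_succ' (fun j => ((n+1).choose j : ℂ) * (j : ℂ) * (fallFac u j * riseFac v (n+1-j)))]
    simp only [Nat.cast_zero, mul_zero, zero_mul, add_zero]
    rw [Finset.mul_sum]
    apply Finset.sum_congr rfl
    intro i hi
    have hnat : (n+1) * n.choose i = (n+1).choose (i+1) * (i+1) := Nat.add_one_mul_choose_eq n i
    have hc : ((n+1).choose (i+1) : ℂ) * ((i:ℂ)+1) = (n+1:ℂ) * (n.choose i : ℂ) := by
      have h := congrArg (Nat.cast : ℕ → ℂ) hnat
      push_cast at h
      linear_combination -h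
    have h2 : n+1-(i+1) = n-i := by omega
    rw [h2, fallFac_succ]
    push_cast
    linear_combination (fallFac u i * riseFac v (n-i) * (u - (i:ℂ))) * hc
  rw [hA, hB, ← mul_sub, ← Finset.sum_sub_distrib]
  rw [Finset.mul_sum, Finset.mul_sum]
  apply Finset.sum_congr rfl
  intro j hj
  ring

lemma S_rec (u v : ℂ) (n : ℕ) :
    ∑ j ∈ range (n+3), ((n+2).choose j : ℂ) * fallFac u j * riseFac v (n+2-j)
    = (u+v) * (∑ j ∈ range (n+2), ((n+1).choose j : ℂ) * fallFac u j * riseFac v (n+1-j))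
      - (n+1 : ℂ) * (u - v - n) * ∑ j ∈ range (n+1), (n.choose j : ℂ) * fallFac u j * riseFac v (n-j) := by
  have ha : ∀ j ∈ range (n+3), ((n+2).choose j : ℂ) * fallFac u j * riseFac v (n+2-j)
      = ((n+2).choose j : ℂ) * (fallFac u j * riseFac v (n+2-j)) := by
    intro j hj; ring
  rw [Finset.sum_congr rfl ha, pascal_sum (n+1) (fun j => fallFac u j * riseFac v (n+2-j))]
  have hb : ∀ j ∈ range (n+2), ((n+1).choose j : ℂ) * (fallFac u j * riseFac v (n+2-j))
      = ((n+1).choose j : ℂ) * fallFac u j * riseFac v (n+1-j) * ((u+v) + ((n+1:ℂ) - 2*j))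
        - ((n+1).choose j : ℂ) * (fallFac u (j+1) * riseFac v (n+2-(j+1))) := by
    intro j hj
    have hj' : j ≤ n+1 := by have := mem_range.mp hj; omega
    have h1 : n+2-j = (n+1-j)+1 := by omega
    have h2 : n+2-(j+1) = n+1-j := by omega
    rw [h1, h2, riseFac_succ, fallFac_succ, Nat.cast_sub hj']
    push_cast; ring
  rw [Finset.sum_congr rfl hb, Finset.sum_sub_distrib]
  have hc : ∀ j ∈ range (n+2),
      ((n+1).choose j : ℂ) * fallFac u j * riseFac v (n+1-j) * ((u+v) + ((n+1:ℂ) - 2*j))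
      = (u+v) * (((n+1).choose j : ℂ) * fallFac u j * riseFac v (n+1-j))
        + ((n+1).choose j : ℂ) * ((n+1:ℂ) - 2*j) * (fallFac u j * riseFac v (n+1-j)) := by
    intro j hj; ring
  rw [Finset.sum_congr rfl hc, Finset.sum_add_distrib, ← Finset.mul_sum, claim2]
  ring

lemma Cay_rec (x y : ℂ) (n : ℕ) :
    Cay (n+2) x y = x * Cay (n+1) x y - (n+1 : ℂ) * (y - n) * Cay n x y := by
  have h := S_rec ((x+y)/2) ((x-y)/2) n
  have h1 : (x+y)/2 + (x-y)/2 = x := by ring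
  have h2 : (x+y)/2 - (x-y)/2 = y := by ring
  simpa [Cay, h1, h2] using h

lemma Cay_zero (x y : ℂ) : Cay 0 x y = 1 := by
  simp [Cay, fallFac, riseFac]

lemma Cay_one (x y : ℂ) : Cay 1 x y = x := by
  simp [Cay, Finset.sum_range_succ, fallFac, riseFac, ascPochhammer_succ_right,
    descPochhammer_succ_right]
  ring

/-- For `k ≥ 1` and the sequence defined by `a₋₁ = 0`, `a₀ = 1`, and
`a_m = (−1/(4m))(k−m+1)((k−m+2)² a_{m−2} − 2s a_{m−1})` for `1 ≤ m ≤ k`, one has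
`a_m = (1/2^m) C(k,m) Cay_m(s;k)` for `0 ≤ m ≤ k`. -/
theorem recursion_eq_cayley (k : ℕ) (hk : 1 ≤ k) (s : ℂ) (a : ℤ → ℂ)
    (hneg : a (-1) = 0) (h0 : a 0 = 1)
    (hrec : ∀ m : ℤ, 1 ≤ m → m ≤ (k : ℤ) →
      a m = (-1 / (4 * (m : ℂ))) * ((k : ℂ) - m + 1) *
        (((k : ℂ) - m + 2) ^ 2 * a (m - 2) - 2 * s * a (m - 1))) :
    ∀ m : ℕ, m ≤ k → a m = (1 / 2 ^ m : ℂ) * (k.choose m : ℂ) * Cay m s (k : ℂ) := by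
  intro m
  induction m using Nat.twoStepInduction with
  | zero =>
    intro _
    simp [h0, Cay_zero]
  | one =>
    intro h1k
    have h := hrec 1 le_rfl (by exact_mod_cast h1k)
    norm_num at h
    rw [hneg, h0] at h
    rw [show ((1:ℕ):ℤ) = (1:ℤ) by norm_num, h, Cay_one, Nat.choose_one_right]
    push_cast
    ring
  | more n ih1 ih2 =>
    intro hm
    have hn : n ≤ k := by omega
    have hn1 : n + 1 ≤ k := by omega
    have e0 := ih1 hn
    have e1 := ih2 hn1
    have hr := hrec ((n:ℤ)+2) (by omega) (by exact_mod_cast hm)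
    have i2 : ((n:ℤ)+2) - 2 = (n:ℤ) := by ring
    have i1 : ((n:ℤ)+2) - 1 = (n:ℤ)+1 := by ring
    rw [i2, i1] at hr
    have e1' : a ((n:ℤ)+1) = (1 / 2 ^ (n+1) : ℂ) * (k.choose (n+1) : ℂ) * Cay (n+1) s (k : ℂ) := by
      exact_mod_cast e1
    rw [e0, e1'] at hr
    have hgoal : a (((n+2:ℕ)):ℤ) = a ((n:ℤ)+2) := by norm_num
    rw [hgoal, hr, Cay_rec]
    -- binomial identities
    have hb1 : (k.choose (n+1) : ℂ) * ((n:ℂ)+1) = (k.choose n : ℂ) * ((k:ℂ) - n) := by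
      have h := congrArg (Nat.cast : ℕ → ℂ) (Nat.choose_succ_right_eq k n)
      push_cast [Nat.cast_sub hn] at h
      linear_combination h
    have hb2 : (k.choose (n+2) : ℂ) * ((n:ℂ)+2) = (k.choose (n+1) : ℂ) * ((k:ℂ) - (n+1)) := by
      have h := congrArg (Nat.cast : ℕ → ℂ) (Nat.choose_succ_right_eq k (n+1))
      push_cast [Nat.cast_sub hn1] at h
      linear_combination h
    have hkn : ((k:ℂ) - n) ≠ 0 := by
      rw [← Nat.cast_sub hn]
      exact_mod_cast (by omega : k - n ≠ 0)
    have hn2 : ((n:ℂ)+2) ≠ 0 := by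
      have : ((n+2:ℕ):ℂ) ≠ 0 := Nat.cast_ne_zero.mpr (by omega)
      push_cast at this
      exact this
    have eCn : (k.choose n : ℂ) = (k.choose (n+1) : ℂ) * ((n:ℂ)+1) / ((k:ℂ)-n) := by
      field_simp
      linear_combination -hb1
    have eC2 : (k.choose (n+2) : ℂ) = (k.choose (n+1) : ℂ) * ((k:ℂ)-(n:ℂ)-1) / ((n:ℂ)+2) := by
      field_simp
      linear_combination hb2
    rw [eCn, eC2]
    have h2n : (2:ℂ)^n ≠ 0 := pow_ne_zero _ two_ne_zero
    push_cast
    field_simp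
    ring
end
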